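/- The Gaussian mechanism M(D) = f(D) + N(0, σ²I), where f has L2-sensitivity Δ (i.e., ‖f(S) - f(S')‖₂ ≤ Δ for all neighboring S, S'), satisfies (α, α·Δ²/(2σ²))-RDP for every α > 1. -/

import Mathlib

open MeasureTheory ProbabilityTheory Real
open scoped ENNReal NNReal


open MeasureTheory ProbabilityTheory

/-- Rényi divergence of order `α` between two measures, via the Radon–Nikodym
derivative. -/
noncomputable def renyiDivM {X : Type*} [MeasurableSpace X] (α : ℝ)
    (P Q : Measure X) : ℝ :=
  (α - 1)⁻¹ * Real.log (∫ x, (P.rnDeriv Q x).toReal ^ α ∂Q)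

lemma lintegral_pi_prod_aux : ∀ {n : ℕ} (μ : Fin n → Measure ℝ), (∀ i, SigmaFinite (μ i)) →
    ∀ (g : Fin n → ℝ → ℝ≥0∞), (∀ i, Measurable (g i)) →
    ∫⁻ x, ∏ i, g i (x i) ∂Measure.pi μ = ∏ i, ∫⁻ y, g i y ∂(μ i) := by
  intro n
  induction n with
  | zero => intro μ _ g _; simp [Measure.pi_empty_univ]
  | succ n ih =>
    intro μ hμ g hg
    haveI := hμ
    have hmeas : Measurable (fun x : Fin (n+1) → ℝ => ∏ i, g i (x i)) :=
      Finset.measurable_prod _ fun i _ => (hg i).comp (measurable_pi_apply i)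
    rw [← ((measurePreserving_piFinSuccAbove μ 0).symm).lintegral_comp hmeas]
    simp_rw [MeasurableEquiv.piFinSuccAbove_symm_apply, Fin.insertNthEquiv,
      Fin.prod_univ_succ, Fin.insertNth_zero, Equiv.coe_fn_mk, Fin.zero_succAbove,
      cast_eq, Fin.cons_zero, Fin.cons_succ]
    rw [lintegral_prod_mul (f := g 0) (g := fun y : Fin n → ℝ => ∏ i, g i.succ (y i))
      (hg 0).aemeasurable
      (Finset.measurable_prod _ fun i _ => (hg i.succ).comp (measurable_pi_apply i)).aemeasurable,
      ih _ (fun i => hμ i.succ) _ (fun i => hg i.succ)]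

lemma pi_withDensity_aux {n : ℕ} (μ : Fin n → Measure ℝ) [∀ i, SigmaFinite (μ i)]
    (g : Fin n → ℝ → ℝ≥0∞) (hg : ∀ i, Measurable (g i))
    (hsf : ∀ i, SigmaFinite ((μ i).withDensity (g i))) :
    Measure.pi (fun i => (μ i).withDensity (g i))
      = (Measure.pi μ).withDensity (fun x => ∏ i, g i (x i)) := by
  haveI : ∀ i, SigmaFinite ((μ i).withDensity (g i)) := hsf
  refine (Measure.pi_eq (μ := fun i => (μ i).withDensity (g i)) fun s hs => ?_)
  rw [withDensity_apply _ (MeasurableSet.univ_pi hs), ← lintegral_indicator (MeasurableSet.univ_pi hs)]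
  have hpt : ∀ x : Fin n → ℝ, (Set.pi Set.univ s).indicator (fun x => ∏ i, g i (x i)) x
      = ∏ i, (s i).indicator (g i) (x i) := by
    intro x
    by_cases hx : x ∈ Set.pi Set.univ s
    · rw [Set.indicator_of_mem hx]
      exact Finset.prod_congr rfl fun i _ => (Set.indicator_of_mem (hx i trivial) _).symm
    · rw [Set.indicator_of_notMem hx]
      simp only [Set.mem_pi, Set.mem_univ, forall_true_left, not_forall] at hx
      obtain ⟨i, hi⟩ := hx
      exact (Finset.prod_eq_zero (Finset.mem_univ i) (Set.indicator_of_notMem hi _)).symm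
  simp_rw [hpt]
  rw [lintegral_pi_prod_aux μ inferInstance _ (fun i => (hg i).indicator (hs i))]
  exact Finset.prod_congr rfl fun i _ => by
    rw [lintegral_indicator (hs i), withDensity_apply _ (hs i)]

section OneDim
variable {σ : ℝ}

lemma hv0_aux (hσ : 0 < σ) : (⟨σ^2, sq_nonneg σ⟩ : ℝ≥0) ≠ 0 :=
  fun h => (pow_pos hσ 2).ne' (congrArg NNReal.toReal h)

lemma gauss_key (hσ : 0 < σ) (α μ ν x : ℝ) :
    gaussianPDFReal ν ⟨σ^2, sq_nonneg σ⟩ x *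
      (gaussianPDFReal μ ⟨σ^2, sq_nonneg σ⟩ x / gaussianPDFReal ν ⟨σ^2, sq_nonneg σ⟩ x) ^ α
    = Real.exp (α * (α-1) * (μ-ν)^2 / (2*σ^2)) *
      gaussianPDFReal (ν + α*(μ-ν)) ⟨σ^2, sq_nonneg σ⟩ x := by
  set v : ℝ≥0 := ⟨σ^2, sq_nonneg σ⟩ with hvdef
  have hv : (v : ℝ) = σ^2 := rfl
  have hC : (0:ℝ) < √(2*π*σ^2) := Real.sqrt_pos.2 (by positivity)
  simp only [gaussianPDFReal, hv]
  rw [mul_div_mul_left _ _ (inv_ne_zero hC.ne'), ← Real.exp_sub,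
    Real.rpow_def_of_pos (Real.exp_pos _), Real.log_exp, mul_assoc, ← Real.exp_add,
    show Real.exp (α * (α-1) * (μ-ν)^2 / (2*σ^2)) * ((√(2*π*σ^2))⁻¹ *
        Real.exp (-(x - (ν + α*(μ-ν)))^2 / (2*σ^2)))
      = (√(2*π*σ^2))⁻¹ * Real.exp (α * (α-1) * (μ-ν)^2 / (2*σ^2) +
          -(x - (ν + α*(μ-ν)))^2 / (2*σ^2)) by rw [Real.exp_add]; ring]
  congr 1
  have h2 : (2:ℝ)*σ^2 ≠ 0 := by positivity
  field_simp
  congr 1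
  ring

lemma gauss_shift (hσ : 0 < σ) (μ ν : ℝ) :
    gaussianReal μ ⟨σ^2, sq_nonneg σ⟩
      = (gaussianReal ν ⟨σ^2, sq_nonneg σ⟩).withDensity
        (fun x => ENNReal.ofReal (gaussianPDFReal μ ⟨σ^2, sq_nonneg σ⟩ x
          / gaussianPDFReal ν ⟨σ^2, sq_nonneg σ⟩ x)) := by
  set v : ℝ≥0 := ⟨σ^2, sq_nonneg σ⟩ with hvdef
  have hv0 : v ≠ 0 := hv0_aux hσ
  rw [gaussianReal_of_var_ne_zero _ hv0, gaussianReal_of_var_ne_zero _ hv0,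
    ← withDensity_mul _ (measurable_gaussianPDF _ _)
      (show Measurable (fun x => ENNReal.ofReal (gaussianPDFReal μ v x / gaussianPDFReal ν v x)) from
        ((measurable_gaussianPDFReal _ _).div (measurable_gaussianPDFReal _ _)).ennreal_ofReal)]
  congr 1
  funext x
  simp only [Pi.mul_apply, gaussianPDF_def]
  rw [← ENNReal.ofReal_mul (gaussianPDFReal_nonneg _ _ _)]
  congr 1
  rw [mul_comm, div_mul_cancel₀ _ (gaussianPDFReal_pos _ _ x hv0).ne']

lemma gauss_lint (hσ : 0 < σ) (α μ ν : ℝ) :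
    ∫⁻ x, ENNReal.ofReal ((gaussianPDFReal μ ⟨σ^2, sq_nonneg σ⟩ x
        / gaussianPDFReal ν ⟨σ^2, sq_nonneg σ⟩ x) ^ α) ∂(gaussianReal ν ⟨σ^2, sq_nonneg σ⟩)
      = ENNReal.ofReal (Real.exp (α * (α-1) * (μ-ν)^2 / (2*σ^2))) := by
  set v : ℝ≥0 := ⟨σ^2, sq_nonneg σ⟩ with hvdef
  have hv0 : v ≠ 0 := hv0_aux hσ
  rw [gaussianReal_of_var_ne_zero _ hv0,
    lintegral_withDensity_eq_lintegral_mul _ (measurable_gaussianPDF _ _)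
      (show Measurable (fun x => ENNReal.ofReal ((gaussianPDFReal μ v x / gaussianPDFReal ν v x) ^ α)) from
        (((measurable_gaussianPDFReal _ _).div (measurable_gaussianPDFReal _ _)).pow_const
        α).ennreal_ofReal)]
  have hpt : ∀ x : ℝ, (gaussianPDF ν v * fun x =>
        ENNReal.ofReal ((gaussianPDFReal μ v x
          / gaussianPDFReal ν v x) ^ α)) x
      = ENNReal.ofReal (Real.exp (α * (α-1) * (μ-ν)^2 / (2*σ^2)))
        * ENNReal.ofReal (gaussianPDFReal (ν + α*(μ-ν)) v x) := by
    intro x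
    simp only [Pi.mul_apply, gaussianPDF_def]
    rw [← ENNReal.ofReal_mul (gaussianPDFReal_nonneg _ _ _), gauss_key hσ α μ ν x,
      ENNReal.ofReal_mul (Real.exp_nonneg _)]
  simp_rw [hpt]
  rw [lintegral_const_mul _ (measurable_gaussianPDFReal _ _).ennreal_ofReal,
    lintegral_gaussianPDFReal_eq_one _ hv0, mul_one]

end OneDim

set_option maxHeartbeats 1000000 in
/-- The Gaussian mechanism `M(D) = f(D) + N(0, σ²I)` applied to a function of
L2-sensitivity `Δ` satisfies `(α, α·Δ²/(2σ²))`-RDP for every `α > 1`. -/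
theorem stmt15 {Data : Type*} (d : ℕ) (Neighbor : Data → Data → Prop)
    (f : Data → EuclideanSpace ℝ (Fin d)) (Δ σ : ℝ) (hσ : 0 < σ)
    (hsens : ∀ S S', Neighbor S S' → ‖f S - f S'‖ ≤ Δ)
    (α : ℝ) (hα : 1 < α) :
    ∀ S S', Neighbor S S' →
      renyiDivM α
        (Measure.pi fun i : Fin d => gaussianReal (f S i) ⟨σ ^ 2, sq_nonneg σ⟩)
        (Measure.pi fun i : Fin d => gaussianReal (f S' i) ⟨σ ^ 2, sq_nonneg σ⟩)
        ≤ α * Δ ^ 2 / (2 * σ ^ 2) := by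
  intro S S' hSS'
  set v : ℝ≥0 := ⟨σ ^ 2, sq_nonneg σ⟩ with hv
  set P := Measure.pi fun i : Fin d => gaussianReal (f S i) v with hPdef
  set Q := Measure.pi fun i : Fin d => gaussianReal (f S' i) v with hQdef
  set r : Fin d → ℝ → ℝ := fun i x =>
    gaussianPDFReal (f S i) v x / gaussianPDFReal (f S' i) v x with hrdef
  set g : Fin d → ℝ → ℝ≥0∞ := fun i x => ENNReal.ofReal (r i x) with hgdef
  have hr0 : ∀ i x, 0 ≤ r i x := fun i x =>
    div_nonneg (gaussianPDFReal_nonneg _ _ _) (gaussianPDFReal_nonneg _ _ _)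
  have hrmeas : ∀ i, Measurable (r i) := fun i =>
    (measurable_gaussianPDFReal _ _).div (measurable_gaussianPDFReal _ _)
  have hg : ∀ i, Measurable (g i) := fun i => (hrmeas i).ennreal_ofReal
  have hG : Measurable (fun x : Fin d → ℝ => ∏ i, g i (x i)) :=
    Finset.measurable_prod _ fun i _ => (hg i).comp (measurable_pi_apply i)
  have h1 : ∀ i : Fin d, gaussianReal (f S i) v
      = (gaussianReal (f S' i) v).withDensity (g i) := fun i => gauss_shift hσ _ _
  have hP : P = Q.withDensity (fun x => ∏ i, g i (x i)) := by
    rw [hPdef, hQdef]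
    have : (fun i : Fin d => gaussianReal (f S i) v)
        = fun i => (gaussianReal (f S' i) v).withDensity (g i) := funext h1
    rw [this]
    exact pi_withDensity_aux _ _ hg fun i => by rw [← h1 i]; infer_instance
  have hrn : P.rnDeriv Q =ᵐ[Q] fun x => ∏ i, g i (x i) := by
    rw [hP]; exact Measure.rnDeriv_withDensity Q hG
  have hstep1 : ∫ x, (P.rnDeriv Q x).toReal ^ α ∂Q
      = ∫ x, ∏ i, (r i (x i)) ^ α ∂Q := by
    refine integral_congr_ae ?_
    filter_upwards [hrn] with x hx
    rw [hx]
    rw [hgdef]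
    simp only []
    rw [ENNReal.toReal_prod]
    simp_rw [ENNReal.toReal_ofReal (hr0 _ _)]
    exact (Real.finset_prod_rpow _ _ (fun i _ => hr0 i (x i)) α).symm
  set N : ℝ := ∑ i, (f S i - f S' i) ^ 2 with hNdef
  have hstep2 : ∫ x, ∏ i, (r i (x i)) ^ α ∂Q
      = Real.exp (α * (α - 1) * N / (2 * σ ^ 2)) := by
    have hms : AEStronglyMeasurable (fun x : Fin d → ℝ => ∏ i, (r i (x i)) ^ α) Q :=
      (Finset.measurable_prod Finset.univ fun i _ =>
        ((hrmeas i).comp (measurable_pi_apply i)).pow_const α).aestronglyMeasurable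
    rw [integral_eq_lintegral_of_nonneg_ae
      (ae_of_all _ fun x => Finset.prod_nonneg fun i _ => Real.rpow_nonneg (hr0 i (x i)) α)
      hms]
    have : ∀ x : Fin d → ℝ, ENNReal.ofReal (∏ i, (r i (x i)) ^ α)
        = ∏ i, ENNReal.ofReal ((r i (x i)) ^ α) :=
      fun x => ENNReal.ofReal_prod_of_nonneg fun i _ => Real.rpow_nonneg (hr0 i (x i)) α
    simp_rw [this]
    rw [hQdef, lintegral_pi_prod_aux _ inferInstance _
      (fun i => ((hrmeas i).pow_const α).ennreal_ofReal)]
    have hone : ∀ i : Fin d, ∫⁻ y, ENNReal.ofReal ((r i y) ^ α) ∂(gaussianReal (f S' i) v)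
        = ENNReal.ofReal (Real.exp (α * (α - 1) * (f S i - f S' i) ^ 2 / (2 * σ ^ 2))) :=
      fun i => gauss_lint hσ α (f S i) (f S' i)
    simp_rw [hone]
    rw [← ENNReal.ofReal_prod_of_nonneg fun i _ => Real.exp_nonneg _,
      ENNReal.toReal_ofReal (Finset.prod_nonneg fun i _ => Real.exp_nonneg _),
      ← Real.exp_sum]
    congr 1
    rw [hNdef, Finset.mul_sum, Finset.sum_div]
  have hN' : N = ‖f S - f S'‖ ^ 2 := by
    rw [EuclideanSpace.norm_eq, Real.sq_sqrt (Finset.sum_nonneg fun i _ => sq_nonneg _), hNdef]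
    exact Finset.sum_congr rfl fun i _ => by
      simp [PiLp.sub_apply, Real.norm_eq_abs, sq_abs]
  unfold renyiDivM
  rw [hstep1, hstep2, Real.log_exp]
  have hα1 : α - 1 ≠ 0 := sub_ne_zero.2 hα.ne'
  have heq : (α - 1)⁻¹ * (α * (α - 1) * N / (2 * σ ^ 2)) = α * N / (2 * σ ^ 2) := by
    field_simp
  rw [heq]
  have hΔ : ‖f S - f S'‖ ≤ Δ := hsens S S' hSS'
  have hN2 : N ≤ Δ ^ 2 := by
    rw [hN']
    exact pow_le_pow_left₀ (norm_nonneg _) hΔ 2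
  gcongr
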